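/- Let f(x) = x + a₂x² + a₃x³ + a₄x⁴ + a₅x⁵ + ⋯ (with a₁ = 1) and f^(n) its n-fold composition. Then f_5^(n) = C(n,1) a₅ + C(n,2)(5 a₂² a₃ + 6 a₂ a₄ + 3 a₃²) + C(n,3)(10 a₂⁴ + 26 a₂² a₃) + 24 C(n,4) a₂⁴. -/

import Mathlib

open PowerSeries Finset

/-- Composition of formal power series (meaningful when `g` has zero constant term):
the coefficient of `x^k` in `f(g(x))` is `∑_{j=0}^{k} f_j · [x^k](g^j)`. -/
noncomputable def pscomp {R : Type*} [CommRing R] (f g : PowerSeries R) : PowerSeries R :=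
  PowerSeries.mk fun k =>
    ∑ j ∈ Finset.range (k + 1), (PowerSeries.coeff j f) * (PowerSeries.coeff k (g ^ j))

/-- The `n`-fold composition `f^(n)`: `f^(1) = f`, `f^(n) = f^(n-1) ∘ f`. -/
noncomputable def psiter {R : Type*} [CommRing R] (f : PowerSeries R) : ℕ → PowerSeries R
  | 0 => PowerSeries.X
  | 1 => f
  | (n + 2) => pscomp (psiter f (n + 1)) f

/-!
Since `f^(n+1) = f^(n) ∘ f` and `a₁ = 1`, the difference `f_k^(n+1) - f_k^(n)` is a polynomial in
the `aᵢ` and the lower coefficients `f_j^(n)`, `j < k`. Working up from `k = 2`, induction on `n`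
with Pascal's rule `C(n+1, i+1) = C(n, i) + C(n, i+1)` expresses each `f_k^(n)` through binomial
coefficients in `n`.
-/

section

variable {R : Type*} [CommRing R]

theorem coeff_pscomp (F g : R⟦X⟧) (k : ℕ) :
    coeff k (pscomp F g) = ∑ j ∈ range (k + 1), coeff j F * coeff k (g ^ j) :=
  coeff_mk _ _

theorem pscomp_X_left {g : R⟦X⟧} (hg : constantCoeff g = 0) : pscomp X g = g := by
  ext k
  rw [coeff_pscomp]
  rcases k with _ | k
  · simp [hg]
  · rw [sum_eq_single 1 (fun j _ hj => by simp [coeff_X, hj]) (by simp)]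
    simp

theorem psiter_succ {f : R⟦X⟧} (hf : constantCoeff f = 0) (n : ℕ) :
    psiter f (n + 1) = pscomp (psiter f n) f := by
  rcases n with _ | n
  · exact (pscomp_X_left hf).symm
  · rfl

theorem constantCoeff_psiter {f : R⟦X⟧} (hf : constantCoeff f = 0) (n : ℕ) :
    constantCoeff (psiter f n) = 0 := by
  induction n with
  | zero => simp [psiter]
  | succ n ih =>
    rw [psiter_succ hf, ← coeff_zero_eq_constantCoeff_apply, coeff_pscomp]
    simp [ih]

theorem coeff_one_psiter {f : R⟦X⟧} (hf : constantCoeff f = 0) (n : ℕ) :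
    coeff 1 (psiter f n) = coeff 1 f ^ n := by
  induction n with
  | zero => simp [psiter]
  | succ n ih =>
    rw [psiter_succ hf, coeff_pscomp]
    simp [sum_range_succ, constantCoeff_psiter hf, ih, pow_succ]

section
variable {a : ℕ → R} (h0 : a 0 = 0) (h1 : a 1 = 1)
include h0

theorem constantCoeff_mk_of_zero : constantCoeff (mk a) = 0 := by
  simp [h0]

include h1

theorem coeff_two_pscomp (F : R⟦X⟧) :
    coeff 2 (pscomp F (mk a)) = coeff 1 F * a 2 + coeff 2 F := by
  rw [coeff_pscomp]
  simp only [sum_range_succ, sum_range_zero, pow_zero, pow_succ, one_mul, coeff_mul,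
    Nat.sum_antidiagonal_eq_sum_range_succ_mk, coeff_one, coeff_mk, h0, h1, Nat.reduceAdd,
    Nat.reduceSub, OfNat.ofNat_ne_zero, ↓reduceIte]
  ring

theorem coeff_three_pscomp (F : R⟦X⟧) :
    coeff 3 (pscomp F (mk a)) = coeff 1 F * a 3 + coeff 2 F * (2 * a 2) + coeff 3 F := by
  rw [coeff_pscomp]
  simp only [sum_range_succ, sum_range_zero, pow_zero, pow_succ, one_mul, coeff_mul,
    Nat.sum_antidiagonal_eq_sum_range_succ_mk, coeff_one, coeff_mk, h0, h1, Nat.reduceAdd,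
    Nat.reduceSub, OfNat.ofNat_ne_zero, ↓reduceIte]
  ring

theorem coeff_four_pscomp (F : R⟦X⟧) :
    coeff 4 (pscomp F (mk a)) = coeff 1 F * a 4 + coeff 2 F * (2 * a 3 + a 2 ^ 2)
      + coeff 3 F * (3 * a 2) + coeff 4 F := by
  rw [coeff_pscomp]
  simp only [sum_range_succ, sum_range_zero, pow_zero, pow_succ, one_mul, coeff_mul,
    Nat.sum_antidiagonal_eq_sum_range_succ_mk, coeff_one, coeff_mk, h0, h1, Nat.reduceAdd,
    Nat.reduceSub, OfNat.ofNat_ne_zero, ↓reduceIte]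
  ring

theorem coeff_five_pscomp (F : R⟦X⟧) :
    coeff 5 (pscomp F (mk a)) = coeff 1 F * a 5 + coeff 2 F * (2 * a 4 + 2 * a 2 * a 3)
      + coeff 3 F * (3 * a 3 + 3 * a 2 ^ 2) + coeff 4 F * (4 * a 2) + coeff 5 F := by
  rw [coeff_pscomp]
  simp only [sum_range_succ, sum_range_zero, pow_zero, pow_succ, one_mul, coeff_mul,
    Nat.sum_antidiagonal_eq_sum_range_succ_mk, coeff_one, coeff_mk, h0, h1, Nat.reduceAdd,
    Nat.reduceSub, OfNat.ofNat_ne_zero, ↓reduceIte]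
  ring

theorem coeff_one_psiter_mk (n : ℕ) : coeff 1 (psiter (mk a) n) = 1 := by
  rw [coeff_one_psiter (constantCoeff_mk_of_zero h0), coeff_mk, h1, one_pow]

theorem coeff_two_psiter (n : ℕ) : coeff 2 (psiter (mk a) n) = n.choose 1 * a 2 := by
  induction n with
  | zero => simp [psiter, coeff_X]
  | succ n ih =>
    rw [psiter_succ (constantCoeff_mk_of_zero h0), coeff_two_pscomp h0 h1,
      coeff_one_psiter_mk h0 h1, ih]
    push_cast [Nat.choose_succ_succ', Nat.choose_zero_right]
    ring

theorem coeff_three_psiter (n : ℕ) :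
    coeff 3 (psiter (mk a) n) = n.choose 1 * a 3 + 2 * n.choose 2 * a 2 ^ 2 := by
  induction n with
  | zero => simp [psiter, coeff_X]
  | succ n ih =>
    rw [psiter_succ (constantCoeff_mk_of_zero h0), coeff_three_pscomp h0 h1,
      coeff_one_psiter_mk h0 h1, coeff_two_psiter h0 h1, ih]
    push_cast [Nat.choose_succ_succ', Nat.choose_zero_right]
    ring

theorem coeff_four_psiter (n : ℕ) :
    coeff 4 (psiter (mk a) n) = n.choose 1 * a 4 + 5 * n.choose 2 * a 2 * a 3
      + (n.choose 2 + 6 * n.choose 3) * a 2 ^ 3 := by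
  induction n with
  | zero => simp [psiter, coeff_X]
  | succ n ih =>
    rw [psiter_succ (constantCoeff_mk_of_zero h0), coeff_four_pscomp h0 h1,
      coeff_one_psiter_mk h0 h1, coeff_two_psiter h0 h1, coeff_three_psiter h0 h1, ih]
    push_cast [Nat.choose_succ_succ', Nat.choose_zero_right]
    ring

end

end

theorem schroder_five_general {R : Type*} [CommRing R] (a : ℕ → R)
    (h0 : a 0 = 0) (h1 : a 1 = 1) (n : ℕ) :
    PowerSeries.coeff 5 (psiter (PowerSeries.mk a) n) =
      (n.choose 1 : R) * a 5
        + (n.choose 2 : R) * (5 * a 2 ^ 2 * a 3 + 6 * a 2 * a 4 + 3 * a 3 ^ 2)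
        + (n.choose 3 : R) * (10 * a 2 ^ 4 + 26 * a 2 ^ 2 * a 3)
        + 24 * (n.choose 4 : R) * a 2 ^ 4 := by
  induction n with
  | zero => simp [psiter, coeff_X]
  | succ n ih =>
    rw [psiter_succ (constantCoeff_mk_of_zero h0), coeff_five_pscomp h0 h1,
      coeff_one_psiter_mk h0 h1, coeff_two_psiter h0 h1, coeff_three_psiter h0 h1,
      coeff_four_psiter h0 h1, ih]
    push_cast [Nat.choose_succ_succ', Nat.choose_zero_right]
    ring

/-- Schröder's formula for the fifth coefficient when `a₁ = 1`:
`f_5^(n) = C(n,1) a₅ + C(n,2)(5 a₂² a₃ + 6 a₂ a₄ + 3 a₃²)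
  + C(n,3)(10 a₂⁴ + 26 a₂² a₃) + 24 C(n,4) a₂⁴`. -/
theorem schroder_five {R : Type*} [CommRing R] [CharZero R] (a : ℕ → R)
    (h0 : a 0 = 0) (h1 : a 1 = 1) (n : ℕ) (hn : 1 ≤ n) :
    PowerSeries.coeff 5 (psiter (PowerSeries.mk a) n) =
      (n.choose 1 : R) * a 5
        + (n.choose 2 : R) * (5 * a 2 ^ 2 * a 3 + 6 * a 2 * a 4 + 3 * a 3 ^ 2)
        + (n.choose 3 : R) * (10 * a 2 ^ 4 + 26 * a 2 ^ 2 * a 3)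
        + 24 * (n.choose 4 : R) * a 2 ^ 4 :=
  schroder_five_general a h0 h1 n
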